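/- arXiv:2505.09200 — 2 statements merged into one kernel-verified Lean document; each statement's English description precedes it below -/
import Mathlib

section
/- Let n ≥ 1, let K ⊆ ℝⁿ be a nonempty compact ball-body, let E ⊆ ℝⁿ be a linear subspace and let P_E denote the orthogonal projection onto E. Then the image P_E(K^c) equals the c-dual of P_E(K) computed inside E, namely P_E(K^c) = {y ∈ E : ∀ x ∈ P_E(K), ‖x − y‖ ≤ 1}, and likewise P_E(K) = {x ∈ E : ∀ y ∈ P_E(K^c), ‖x − y‖ ≤ 1}. -/
open Metric Set

noncomputable section

/-- The `c`-dual of a set `A ⊆ ℝⁿ`. -/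
def cDual {n : ℕ} (A : Set (EuclideanSpace ℝ (Fin n))) : Set (EuclideanSpace ℝ (Fin n)) :=
  {y | ∀ x ∈ A, ‖x - y‖ ≤ 1}

/-! A ball-body `K = cDual (cDual K)` contains the spindle `cDual (cDual {x, y})` of any two of
its points, because `cDual` is antitone. If `k` maximises `⟪u, ·⟫` on `K` for a unit vector `u`
and some `y ∈ K` lay outside the ball `B(k - u, 1)`, the spindle of `k` and `y` would contain a
point beyond `k` in direction `u`; hence `k - u ∈ cDual K`.

`P_E` is 1-Lipschitz, so `P_E (cDual K)` lies in the dual of `P_E K` inside `E`. Conversely, a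
point `y ∈ E` outside the compact convex set `P_E (cDual K)` is strictly separated from it by a
unit vector `u ∈ E`, and for the maximiser `k` of `⟪u, ·⟫` on `K` the point `k - u ∈ cDual K`
forces `⟪u, P_E k - y⟫ > 1`. The second identity is the first one for the ball-body `cDual K`. -/

open scoped RealInnerProductSpace

lemma norm_sub_smul_sub_smul_le_one {F : Type*} [NormedAddCommGroup F] [InnerProductSpace ℝ F]
    {d a u : F} {s r : ℝ} (hd : ‖d‖ ≤ 1) (hda : ‖d - a‖ ≤ 1) (hu : ‖u‖ = 1)
    (hs₀ : 0 ≤ s) (hs₁ : s ≤ 1) (hr₀ : 0 ≤ r) (hr₁ : r ≤ 1)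
    (hr : 2 * r ≤ s * (1 - s) * ‖a‖ ^ 2) :
    ‖d - s • a - r • u‖ ≤ 1 := by
  have hconvex :
      ‖d - s • a‖ ^ 2 = (1 - s) * ‖d‖ ^ 2 + s * ‖d - a‖ ^ 2 - s * (1 - s) * ‖a‖ ^ 2 := by
    simp only [norm_sub_sq_real, inner_smul_right, norm_smul, Real.norm_eq_abs, mul_pow, sq_abs]
    ring
  have hsq : ‖d - s • a‖ ^ 2 ≤ (1 - r) ^ 2 := by
    have h₁ : ‖d‖ ^ 2 ≤ 1 := pow_le_one₀ (norm_nonneg _) hd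
    have h₂ : ‖d - a‖ ^ 2 ≤ 1 := pow_le_one₀ (norm_nonneg _) hda
    nlinarith
  calc ‖d - s • a - r • u‖ ≤ ‖d - s • a‖ + ‖r • u‖ := norm_sub_le _ _
    _ ≤ (1 - r) + r := by
        gcongr
        · exact (pow_le_pow_iff_left₀ (norm_nonneg _) (by linarith) two_ne_zero).mp hsq
        · rw [norm_smul, hu, mul_one, Real.norm_of_nonneg hr₀]
    _ = 1 := by ring

variable {n : ℕ}

lemma cDual_eq_biInter (A : Set (EuclideanSpace ℝ (Fin n))) :
    cDual A = ⋂ x ∈ A, closedBall x 1 := by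
  ext y
  simp [cDual, dist_eq_norm, norm_sub_rev]

lemma cDual_anti {A B : Set (EuclideanSpace ℝ (Fin n))} (h : A ⊆ B) : cDual B ⊆ cDual A :=
  fun _ hy x hx => hy x (h hx)

lemma convex_cDual (A : Set (EuclideanSpace ℝ (Fin n))) : Convex ℝ (cDual A) := by
  rw [cDual_eq_biInter]
  exact convex_iInter₂ fun x _ => convex_closedBall x 1

lemma isCompact_cDual {A : Set (EuclideanSpace ℝ (Fin n))} (hA : A.Nonempty) :
    IsCompact (cDual A) := by
  obtain ⟨x, hx⟩ := hA
  rw [cDual_eq_biInter]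
  exact (isCompact_closedBall x 1).of_isClosed_subset
    (isClosed_biInter fun _ _ => isClosed_closedBall) (biInter_subset_of_mem hx)

lemma exists_mem_cDual_cDual_pair_inner_gt {x y u : EuclideanSpace ℝ (Fin n)} (hu : ‖u‖ = 1)
    (hyx : ⟪u, y - x⟫ ≤ 0) (hy : 1 < ‖y - (x - u)‖) :
    ∃ p ∈ cDual (cDual {x, y}), ⟪u, x⟫ < ⟪u, p⟫ := by
  set a := y - x
  set N := ‖a‖ ^ 2
  have hgap : 0 < N + 2 * ⟪u, a⟫ := by
    have h : ‖a + u‖ ^ 2 = N + 2 * ⟪u, a⟫ + 1 := by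
      rw [norm_add_sq_real, hu, real_inner_comm]; ring
    have : y - (x - u) = a + u := by simp only [a]; abel
    rw [this] at hy
    linarith [one_lt_pow₀ hy two_ne_zero]
  have hN : 0 < N := by linarith
  -- `p = x + s • a + r • u` with `r = s (1 - s) ‖a‖² / 2` lies in the spindle, and it is beyond
  -- `x` as soon as `s ‖a‖² < ‖a‖² + 2 ⟪u, a⟫ = ‖a + u‖² - 1`; the factor `2 + ‖a‖²` keeps `r ≤ 1`.
  set s := (N + 2 * ⟪u, a⟫) / (N * (2 + N))
  set r := s * (1 - s) * N / 2
  have hs₀ : 0 < s := by positivity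
  have hsN : s * N = (N + 2 * ⟪u, a⟫) / (2 + N) := by
    simp only [s]; field_simp
  have hsN₁ : s * N ≤ 1 := by
    rw [hsN, div_le_one (by positivity)]; linarith
  have hsN₂ : s * N < N + 2 * ⟪u, a⟫ := by
    rw [hsN]; exact div_lt_self hgap (by linarith)
  have hs₁ : s ≤ 1 := (lt_of_mul_lt_mul_right (by linarith : s * N < 1 * N) hN.le).le
  have hr₁ : r ≤ 1 := by simp only [r]; nlinarith [mul_pos (mul_pos hs₀ hs₀) hN]
  have hgain : 0 < s * ⟪u, a⟫ + r := by
    have : s * ⟪u, a⟫ + r = s * (N + 2 * ⟪u, a⟫ - s * N) / 2 := by simp only [r]; ring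
    rw [this]
    exact half_pos (mul_pos hs₀ (by linarith))
  refine ⟨x + s • a + r • u, ?_, ?_⟩
  · rintro w hw
    have hxw : ‖x - w‖ ≤ 1 := hw x (by simp)
    have hyw : ‖y - w‖ ≤ 1 := hw y (by simp)
    have h := norm_sub_smul_sub_smul_le_one (d := w - x) (a := a) (s := s) (r := r)
      (by rwa [norm_sub_rev])
      (by rwa [show w - x - a = w - y by simp only [a]; abel, norm_sub_rev])
      hu hs₀.le hs₁ (by positivity) hr₁ (by simp only [r, N]; linarith)
    rwa [show w - x - s • a - r • u = w - (x + s • a + r • u) by abel] at h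
  · rw [inner_add_right, inner_add_right, real_inner_smul_right, real_inner_smul_right,
      real_inner_self_eq_norm_sq, hu]
    linarith

lemma sub_mem_cDual_of_isMaxOn {K : Set (EuclideanSpace ℝ (Fin n))} (hK : K = cDual (cDual K))
    {u k : EuclideanSpace ℝ (Fin n)} (hu : ‖u‖ = 1) (hk : k ∈ K)
    (hmax : IsMaxOn (fun x => ⟪u, x⟫) K k) : k - u ∈ cDual K := by
  intro y hy
  by_contra! hfar
  have hyk : ⟪u, y - k⟫ ≤ 0 := by
    rw [inner_sub_right]; linarith [show ⟪u, y⟫ ≤ ⟪u, k⟫ from hmax hy]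
  obtain ⟨p, hp, hlt⟩ := exists_mem_cDual_cDual_pair_inner_gt hu hyk hfar
  have hpK : p ∈ K := by
    rw [hK]; exact cDual_anti (cDual_anti (pair_subset hk hy)) hp
  exact (show ⟪u, p⟫ ≤ ⟪u, k⟫ from hmax hpK).not_gt hlt

lemma cDual_nonempty (hn : 1 ≤ n) {K : Set (EuclideanSpace ℝ (Fin n))}
    (hK : K = cDual (cDual K)) (hne : K.Nonempty) (hcomp : IsCompact K) : (cDual K).Nonempty := by
  have : Nonempty (Fin n) := ⟨⟨0, hn⟩⟩
  obtain ⟨u, hu⟩ := exists_norm_eq (EuclideanSpace ℝ (Fin n)) zero_le_one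
  obtain ⟨k, hk, hmax⟩ := hcomp.exists_isMaxOn hne (f := fun x => ⟪u, x⟫) (by fun_prop)
  exact ⟨k - u, sub_mem_cDual_of_isMaxOn hK hu hk hmax⟩

lemma exists_norm_eq_one_inner_lt_of_notMem {F : Type*} [NormedAddCommGroup F]
    [InnerProductSpace ℝ F] [CompleteSpace F] {S : Set F} (hconv : Convex ℝ S)
    (hclosed : IsClosed S) (hne : S.Nonempty) {y : F} (hy : y ∉ S) :
    ∃ u : F, ‖u‖ = 1 ∧ ∀ z ∈ S, ⟪u, y⟫ < ⟪u, z⟫ := by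
  obtain ⟨f, c, hfy, hfS⟩ := geometric_hahn_banach_point_closed hconv hclosed hy
  set v := (InnerProductSpace.toDual ℝ F).symm f
  have hv : ∀ x, ⟪v, x⟫ = f x := fun x => InnerProductSpace.toDual_symm_apply
  have hv₀ : v ≠ 0 := by
    rintro h
    obtain ⟨z, hz⟩ := hne
    have hfz := hfS z hz
    rw [← hv, h, inner_zero_left] at hfy hfz
    linarith
  refine ⟨‖v‖⁻¹ • v, ?_, fun z hz => ?_⟩
  · rw [norm_smul, norm_inv, norm_norm, inv_mul_cancel₀ (norm_ne_zero_iff.mpr hv₀)]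
  · rw [real_inner_smul_left, real_inner_smul_left, hv, hv]
    exact mul_lt_mul_of_pos_left (hfy.trans (hfS z hz)) (by positivity)

theorem image_orthogonalProjectionOnto_cDual (hn : 1 ≤ n) {K : Set (EuclideanSpace ℝ (Fin n))}
    (hne : K.Nonempty) (hcomp : IsCompact K) (hK : K = cDual (cDual K))
    (E : Submodule ℝ (EuclideanSpace ℝ (Fin n))) :
    E.orthogonalProjectionOnto '' cDual K =
      {y : E | ∀ x ∈ E.orthogonalProjectionOnto '' K, ‖x - y‖ ≤ 1} := by
  set P := E.orthogonalProjectionOnto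
  ext y
  constructor
  · rintro ⟨z, hz, rfl⟩ _ ⟨k, hk, rfl⟩
    rw [← dist_eq_norm]
    calc dist (P k) (P z) ≤ 1 * dist k z :=
          E.lipschitzWith_orthogonalProjectionOnto.dist_le_mul k z
      _ ≤ 1 := by rw [one_mul, dist_eq_norm]; exact hz k hk
  · intro hy
    by_contra hyL
    obtain ⟨u, hu, hsep⟩ := exists_norm_eq_one_inner_lt_of_notMem
      ((convex_cDual K).linear_image P.toLinearMap)
      ((isCompact_cDual hne).image P.continuous).isClosed
      ((cDual_nonempty hn hK hne hcomp).image P) hyL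
    have hu' : ‖(u : EuclideanSpace ℝ (Fin n))‖ = 1 := by simpa using hu
    obtain ⟨k, hk, hmax⟩ :=
      hcomp.exists_isMaxOn hne (f := fun x => ⟪(u : EuclideanSpace ℝ (Fin n)), x⟫) (by fun_prop)
    have hsupp := hsep (P (k - u)) ⟨_, sub_mem_cDual_of_isMaxOn hK hu' hk hmax, rfl⟩
    have hnear : ⟪u, P k - y⟫ ≤ 1 :=
      (real_inner_le_norm _ _).trans (by rw [hu, one_mul]; exact hy _ ⟨k, hk, rfl⟩)
    rw [Submodule.inner_orthogonalProjectionOnto_eq_of_mem_left, inner_sub_right,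
      real_inner_self_eq_norm_sq, hu'] at hsupp
    rw [inner_sub_right, Submodule.inner_orthogonalProjectionOnto_eq_of_mem_left] at hnear
    linarith

/-- Projections commute with `c`-duality: for a nonempty compact ball-body `K` and a subspace
`E` with orthogonal projection `P_E`, the set `P_E(K^c)` equals the `c`-dual of `P_E(K)`
computed inside `E`, and `P_E(K)` equals the `c`-dual of `P_E(K^c)` inside `E`. -/
theorem stmt6 (n : ℕ) (hn : 1 ≤ n) (K : Set (EuclideanSpace ℝ (Fin n)))
    (hne : K.Nonempty) (hcomp : IsCompact K) (hbb : K = cDual (cDual K))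
    (E : Submodule ℝ (EuclideanSpace ℝ (Fin n))) :
    (Submodule.orthogonalProjectionOnto E) '' (cDual K) =
        {y : E | ∀ x ∈ (Submodule.orthogonalProjectionOnto E) '' K, ‖x - y‖ ≤ 1} ∧
      (Submodule.orthogonalProjectionOnto E) '' K =
        {x : E | ∀ y ∈ (Submodule.orthogonalProjectionOnto E) '' (cDual K), ‖x - y‖ ≤ 1} := by
  refine ⟨image_orthogonalProjectionOnto_cDual hn hne hcomp hbb E, ?_⟩
  have hdual := image_orthogonalProjectionOnto_cDual hn (cDual_nonempty hn hbb hne hcomp)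
    (isCompact_cDual hne) (by rw [← hbb]) E
  rw [← hbb] at hdual
  rw [hdual]
  ext x
  exact forall₂_congr fun _ _ => by rw [norm_sub_rev]
end
end

section
/- Let n ≥ 1, let K ⊆ ℝⁿ be a nonempty compact ball-body, let r ∈ [0,1] and x ∈ ℝⁿ be such that B(x,r) ⊆ K and r is the in-radius of K (i.e. every closed ball B(x',r') contained in K has r' ≤ r). Then K ⊆ B(x, √(2r − r²)); in particular the out-radius of K is at most √(2r − r²). -/
/-!
Let `C = K^c`, so that `K = C^c`. Since `B(x, r) ⊆ K`, every point of `C` lies within `1 - r`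
of `x`, and every point of `C` lies within `1` of any `z ∈ K`. If `|z - x|² > 2r - r²`, moving
the centre from `x` slightly towards `z` gives a point `x'` with `C ⊆ B(x', R)` for some
`R < 1 - r`, by the identity
`|y - x_c|² = (1 - c)|y - x|² + c|y - z|² - c(1 - c)|z - x|²` for `x_c = x + c (z - x)`.
Then `B(x', 1 - R) ⊆ C^c = K` is a ball of radius larger than `r`, contradicting maximality.
-/

open Metric Set

noncomputable section

theorem add_dist_le_of_closedBall_subset {F : Type*} [NormedAddCommGroup F] [NormedSpace ℝ F]
    {x y : F} {r R : ℝ} (hr : 0 ≤ r) (hrR : r ≤ R) (h : closedBall x r ⊆ closedBall y R) :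
    r + dist x y ≤ R := by
  rcases eq_or_ne x y with rfl | hxy
  · simpa using hrR
  have hd : 0 < dist y x := dist_pos.2 hxy.symm
  -- the point of the ray from `y` through `x` at distance `r` beyond `x`
  set p := AffineMap.lineMap y x (1 + r / dist y x)
  have hpx : dist p x = r := by
    rw [dist_lineMap_right, sub_add_cancel_left, norm_neg, Real.norm_eq_abs,
      abs_of_nonneg (by positivity), div_mul_cancel₀ _ hd.ne']
  have hpy : dist p y = r + dist x y := by
    rw [dist_lineMap_left, Real.norm_eq_abs, abs_of_nonneg (by positivity), add_mul,
      div_mul_cancel₀ _ hd.ne', dist_comm y x]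
    ring
  simpa [hpy] using h (mem_closedBall.2 hpx.le)

section InnerProductSpace

variable {F : Type*} [NormedAddCommGroup F] [InnerProductSpace ℝ F]

theorem dist_lineMap_sq (x z y : F) (c : ℝ) :
    dist y (AffineMap.lineMap x z c) ^ 2 =
      (1 - c) * dist y x ^ 2 + c * dist y z ^ 2 - c * (1 - c) * dist x z ^ 2 := by
  have h₁ : y - AffineMap.lineMap x z c = (1 - c) • (y - x) + c • (y - z) := by
    rw [AffineMap.lineMap_apply_module]; module
  have h₂ : x - z = (y - z) - (y - x) := by abel
  simp only [dist_eq_norm]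
  rw [h₁, h₂, norm_add_sq_real, norm_sub_sq_real (y - z), norm_smul, norm_smul, inner_smul_left,
    inner_smul_right, real_inner_comm (y - z)]
  simp only [Real.norm_eq_abs, mul_pow, sq_abs, RCLike.conj_to_real]
  ring

theorem exists_smaller_closedBall_of_subset_inter {C : Set F} (hC : C.Nonempty) {x z : F}
    {r : ℝ} (hr : 0 ≤ r) (hx : C ⊆ closedBall x (1 - r)) (hz : C ⊆ closedBall z 1)
    (hxz : 2 * r - r ^ 2 < dist x z ^ 2) :
    ∃ x' R, R < 1 - r ∧ C ⊆ closedBall x' R := by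
  obtain ⟨y₀, hy₀⟩ := hC
  have hr1 : 0 ≤ 1 - r := dist_nonneg.trans (hx hy₀)
  set d := dist x z
  set δ := d ^ 2 - (2 * r - r ^ 2) with hδ_def
  have hδ : 0 < δ := by linarith
  have hd : 0 < d ^ 2 := by nlinarith
  -- chosen so that `c² d² = c δ / 2`, which turns the bound of `dist_lineMap_sq` into `E` below
  set c := δ / (2 * d ^ 2) with hc_def
  have hc0 : 0 < c := by positivity
  have hc1 : c ≤ 1 := by rw [div_le_one (by positivity)]; nlinarith
  have hcd : c * d ^ 2 = δ / 2 := by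
    rw [hc_def, div_mul_eq_mul_div, mul_div_mul_right _ _ hd.ne']
  set E := (1 - r) ^ 2 - c * δ / 2 with hE_def
  have hbound : ∀ y ∈ C, dist y (AffineMap.lineMap x z c) ^ 2 ≤ E := by
    intro y hy
    have hyx : (1 - c) * dist y x ^ 2 ≤ (1 - c) * (1 - r) ^ 2 :=
      mul_le_mul_of_nonneg_left (pow_le_pow_left₀ dist_nonneg (hx hy) 2) (by linarith)
    have hyz : c * dist y z ^ 2 ≤ c :=
      mul_le_of_le_one_right hc0.le (pow_le_one₀ dist_nonneg (hz hy))
    have hcc : c * (c * d ^ 2) = c * (δ / 2) := by rw [hcd]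
    rw [dist_lineMap_sq]
    linarith
  have hE : 0 ≤ E := (sq_nonneg _).trans (hbound y₀ hy₀)
  refine ⟨AffineMap.lineMap x z c, √E, ?_, fun y hy => ?_⟩
  · calc √E < √((1 - r) ^ 2) := Real.sqrt_lt_sqrt hE (by linarith [mul_pos hc0 hδ])
      _ = 1 - r := Real.sqrt_sq hr1
  · exact mem_closedBall.2 (Real.le_sqrt_of_sq_le (hbound y hy))

end InnerProductSpace

section cDual

variable {n : ℕ}

theorem mem_cDual_iff {A : Set (EuclideanSpace ℝ (Fin n))} {y : EuclideanSpace ℝ (Fin n)} :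
    y ∈ cDual A ↔ A ⊆ closedBall y 1 := by
  simp only [cDual, mem_ofPred_eq, subset_def, mem_closedBall, dist_eq_norm]

theorem cDual_empty : cDual (∅ : Set (EuclideanSpace ℝ (Fin n))) = univ := by
  ext y
  simp [mem_cDual_iff]

theorem closedBall_subset_cDual {A : Set (EuclideanSpace ℝ (Fin n))} {p : EuclideanSpace ℝ (Fin n)}
    {R : ℝ} (h : A ⊆ closedBall p R) : closedBall p (1 - R) ⊆ cDual A := by
  intro q hq
  refine mem_cDual_iff.2 fun y hy => mem_closedBall.2 ?_
  linarith [dist_triangle y p q, mem_closedBall.1 (h hy), mem_closedBall'.1 hq]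

theorem cDual_subset_closedBall {K : Set (EuclideanSpace ℝ (Fin n))}
    {x : EuclideanSpace ℝ (Fin n)} {r : ℝ} (hr0 : 0 ≤ r) (hr1 : r ≤ 1)
    (h : closedBall x r ⊆ K) : cDual K ⊆ closedBall x (1 - r) := by
  intro y hy
  have := add_dist_le_of_closedBall_subset hr0 hr1 (h.trans (mem_cDual_iff.1 hy))
  rw [mem_closedBall, dist_comm]
  linarith

end cDual

theorem stmt13_general (n : ℕ) (K : Set (EuclideanSpace ℝ (Fin n)))
    (hbb : K = cDual (cDual K))
    (x : EuclideanSpace ℝ (Fin n)) (r : ℝ) (hr : r ∈ Set.Icc (0 : ℝ) 1)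
    (hin : closedBall x r ⊆ K)
    (hmax : ∀ (x' : EuclideanSpace ℝ (Fin n)) (r' : ℝ), 0 ≤ r' →
      closedBall x' r' ⊆ K → r' ≤ r) :
    K ⊆ closedBall x (Real.sqrt (2 * r - r ^ 2)) := by
  intro z hz
  by_contra hfar
  have hdual : (cDual K).Nonempty := by
    refine nonempty_iff_ne_empty.2 fun h => ?_
    have := hmax x (r + 1) (by linarith [hr.1]) (by rw [hbb, h, cDual_empty]; exact subset_univ _)
    linarith
  have hxz : 2 * r - r ^ 2 < dist x z ^ 2 := by
    rw [mem_closedBall, not_le, dist_comm] at hfar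
    exact (Real.sqrt_lt' ((Real.sqrt_nonneg _).trans_lt hfar)).1 hfar
  have hzC : cDual K ⊆ closedBall z 1 := fun y hy =>
    mem_closedBall_comm.1 (mem_cDual_iff.1 hy hz)
  obtain ⟨x', R, hR, hsub⟩ := exists_smaller_closedBall_of_subset_inter hdual hr.1
    (cDual_subset_closedBall hr.1 hr.2 hin) hzC hxz
  have := hmax x' (1 - R) (by linarith [hr.1]) (by rw [hbb]; exact closedBall_subset_cDual hsub)
  linarith

/-- If `B(x,r) ⊆ K` attains the in-radius of a nonempty compact ball-body `K` (with
`r ∈ [0,1]`), then `K ⊆ B(x, √(2r - r²))`. -/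
theorem stmt13 (n : ℕ) (hn : 1 ≤ n) (K : Set (EuclideanSpace ℝ (Fin n)))
    (hne : K.Nonempty) (hcomp : IsCompact K) (hbb : K = cDual (cDual K))
    (x : EuclideanSpace ℝ (Fin n)) (r : ℝ) (hr : r ∈ Set.Icc (0 : ℝ) 1)
    (hin : closedBall x r ⊆ K)
    (hmax : ∀ (x' : EuclideanSpace ℝ (Fin n)) (r' : ℝ), 0 ≤ r' →
      closedBall x' r' ⊆ K → r' ≤ r) :
    K ⊆ closedBall x (Real.sqrt (2 * r - r ^ 2)) :=
  stmt13_general n K hbb x r hr hin hmax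
end
end
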